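/- arXiv:1403.7922 — 5 statements merged into one kernel-verified Lean document; each statement's English description precedes it below -/
import Mathlib

section
/- Let f : F_2^m → F_2^m be weakly APN but not APN. Then there exists a nonzero a ∈ F_2^m such that Im(f̂_a) is not a coset of a linear subspace of F_2^m, i.e. there is no F_2-linear subspace W ⊆ F_2^m and w ∈ F_2^m with Im(f̂_a) = w + W. -/
/-- `F_2^m` as the space of binary vectors of length `m`. -/
abbrev BV (m : ℕ) := Fin m → ZMod 2

/-- The derivative of `f` in direction `a` : `f̂_a(x) = f(x+a) + f(x)`. -/
def der {m : ℕ} (f : BV m → BV m) (a : BV m) : BV m → BV m := fun x => f (x + a) + f x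

/-- `f` is weakly APN: `|Im(f̂_a)| > 2^(m-2)` for all `a ≠ 0`. -/
def WeakAPN {m : ℕ} (f : BV m → BV m) : Prop :=
  ∀ a : BV m, a ≠ 0 → 2 ^ (m - 2) < Nat.card (Set.range (der f a))

/-- `f` is APN: for every `a ≠ 0` and every `b`, `f(x+a) + f(x) = b` has at most 2 solutions. -/
def IsAPN {m : ℕ} (f : BV m → BV m) : Prop :=
  ∀ a : BV m, a ≠ 0 → ∀ b : BV m, Nat.card {x : BV m // f (x + a) + f x = b} ≤ 2

/-- If `f` is weakly APN but not APN, then there is a nonzero `a` such that `Im(f̂_a)` is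
not a coset `w + W` of an `F_2`-linear subspace `W` of `F_2^m`. -/
theorem stmt_3 (m : ℕ) (f : BV m → BV m) (h1 : WeakAPN f) (h2 : ¬ IsAPN f) :
    ∃ a : BV m, a ≠ 0 ∧
      ¬ ∃ (W : Submodule (ZMod 2) (BV m)) (w : BV m),
        Set.range (der f a) = {y : BV m | ∃ u ∈ W, y = w + u} := by
  classical
  rw [IsAPN] at h2; push_neg at h2
  obtain ⟨a, ha, b, hb⟩ := h2
  refine ⟨a, ha, ?_⟩
  rintro ⟨W, w, hW⟩
  set g := der f a with hg
  -- basic facts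
  have haa : a + a = 0 := by ext i; exact CharTwo.add_self_eq_zero _
  have hper : ∀ x, g (x + a) = g x := by
    intro x
    simp only [hg, der, add_assoc, haa, add_zero]
    exact add_comm _ _
  have hne : ∀ x : BV m, x + a ≠ x := by
    intro x h
    exact ha (by rwa [add_eq_left] at h)
  -- fibers
  let F : BV m → Finset (BV m) := fun c => Finset.univ.filter (fun x => g x = c)
  let s : Finset (BV m) := Finset.univ.image g
  have hFs : ∀ c ∈ s, 2 ≤ (F c).card := by
    intro c hc
    obtain ⟨x, _, hx⟩ := Finset.mem_image.mp hc
    have h1' : x ∈ F c := Finset.mem_filter.mpr ⟨Finset.mem_univ _, hx⟩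
    have h2' : x + a ∈ F c := Finset.mem_filter.mpr ⟨Finset.mem_univ _, by rw [hper]; exact hx⟩
    exact Finset.one_lt_card.mpr ⟨x, h1', x + a, h2', (hne x).symm⟩
  -- the bad fiber
  have hb3 : 3 ≤ (F b).card := by
    have : Nat.card {x : BV m // f (x + a) + f x = b} = (F b).card := by
      rw [Nat.card_eq_fintype_card, Fintype.card_subtype]
      congr 1
    omega
  have hbs : b ∈ s := by
    have : (F b).Nonempty := Finset.card_pos.mp (by omega)
    obtain ⟨x, hx⟩ := this
    exact Finset.mem_image.mpr ⟨x, Finset.mem_univ _, (Finset.mem_filter.mp hx).2⟩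
  -- fiber over b has ≥ 4 elements
  have hb4 : 4 ≤ (F b).card := by
    obtain ⟨x, hx⟩ := Finset.card_pos.mp (show 0 < (F b).card by omega)
    have hxb : g x = b := (Finset.mem_filter.mp hx).2
    have hxa : x + a ∈ F b := Finset.mem_filter.mpr ⟨Finset.mem_univ _, by rw [hper]; exact hxb⟩
    have hsub2 : ({x, x + a} : Finset (BV m)) ⊆ F b := by
      intro y hy
      rcases Finset.mem_insert.mp hy with h | h
      · rwa [h]
      · rw [Finset.mem_singleton.mp h]; exact hxa
    have hcard2 : ({x, x + a} : Finset (BV m)).card = 2 := by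
      rw [Finset.card_insert_of_notMem (by simp [(hne x).symm, Ne.symm]), Finset.card_singleton]
    obtain ⟨z, hz, hz2⟩ : ∃ z ∈ F b, z ∉ ({x, x + a} : Finset (BV m)) := by
      by_contra hcon
      push_neg at hcon
      have := Finset.card_le_card hcon
      omega
    have hzx : z ≠ x := by intro h; exact hz2 (by simp [h])
    have hzxa : z ≠ x + a := by intro h; exact hz2 (by simp [h])
    have hza : z + a ∈ F b := Finset.mem_filter.mpr ⟨Finset.mem_univ _,
      by rw [hper]; exact (Finset.mem_filter.mp hz).2⟩
    have hzax : z + a ≠ x := by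
      intro h
      apply hzxa
      have : z + a + a = x + a := by rw [h]
      rwa [add_assoc, haa, add_zero] at this
    have hzaxa : z + a ≠ x + a := by
      intro h
      apply hzx
      have h2 : z + a + a = x + a + a := by rw [h]
      rwa [add_assoc, haa, add_zero, add_assoc, haa, add_zero] at h2
    have hsub4 : ({x, x + a, z, z + a} : Finset (BV m)) ⊆ F b := by
      intro y hy
      simp only [Finset.mem_insert, Finset.mem_singleton] at hy
      rcases hy with h | h | h | h
      · rwa [h]
      · rw [h]; exact hxa
      · rw [h]; exact hz
      · rw [h]; exact hza
    have hcard4 : ({x, x + a, z, z + a} : Finset (BV m)).card = 4 := by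
      rw [Finset.card_insert_of_notMem, Finset.card_insert_of_notMem,
          Finset.card_insert_of_notMem, Finset.card_singleton]
      · simp [(hne z).symm, Ne.symm]
      · exact fun h => by
          simp only [Finset.mem_insert, Finset.mem_singleton] at h
          rcases h with h | h
          · exact hzxa h.symm
          · exact hzaxa h.symm
      · exact fun h => by
          simp only [Finset.mem_insert, Finset.mem_singleton] at h
          rcases h with h | h | h
          · exact hne x h.symm
          · exact hzx h.symm
          · exact hzax h.symm
    calc 4 = ({x, x + a, z, z + a} : Finset (BV m)).card := hcard4.symm
    _ ≤ (F b).card := Finset.card_le_card hsub4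
  -- counting
  have hsum : (Finset.univ : Finset (BV m)).card = ∑ c ∈ s, (F c).card :=
    Finset.card_eq_sum_card_fiberwise (fun x _ => Finset.mem_image_of_mem g (Finset.mem_univ x))
  have huniv : (Finset.univ : Finset (BV m)).card = 2 ^ m := by
    simp [Fintype.card_fun]
  have hlow : 2 * s.card + 2 ≤ 2 ^ m := by
    have h1' : ∑ c ∈ s, (F c).card = (F b).card + ∑ c ∈ s.erase b, (F c).card :=
      (Finset.add_sum_erase s _ hbs).symm
    have h2' : (s.erase b).card • 2 ≤ ∑ c ∈ s.erase b, (F c).card :=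
      Finset.card_nsmul_le_sum _ _ _ (fun c hc => hFs c (Finset.mem_of_mem_erase hc))
    have h3' : (s.erase b).card = s.card - 1 := Finset.card_erase_of_mem hbs
    have h4' : 1 ≤ s.card := Finset.card_pos.mpr ⟨b, hbs⟩
    simp only [smul_eq_mul] at h2'
    omega
  -- coset cardinality
  have hscard : (s : Set (BV m)) = Set.range g := by
    simp [s]
  letI : Fintype W := Fintype.ofFinite W
  have hWcard : Nat.card (Set.range g) = 2 ^ (Module.finrank (ZMod 2) W) := by
    rw [hW]
    have himg : {y : BV m | ∃ u ∈ W, y = w + u} = (fun u => w + u) '' (W : Set (BV m)) := by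
      ext y
      constructor
      · rintro ⟨u, hu, rfl⟩; exact ⟨u, hu, rfl⟩
      · rintro ⟨u, hu, rfl⟩; exact ⟨u, hu, rfl⟩
    rw [himg, Nat.card_image_of_injective (add_right_injective w), SetLike.coe_sort_coe,
        Nat.card_eq_fintype_card]
    exact Module.card_eq_pow_finrank (K := ZMod 2)
  have hsc : s.card = Nat.card (Set.range g) := by
    rw [← hscard, Nat.card_coe_set_eq, Set.ncard_coe_finset]
  -- finish
  have hk := h1 a ha
  rw [hWcard] at hk
  have hm2 : 2 ≤ m := by
    have h4m : 4 ≤ 2 ^ m := le_trans hb4 (by rw [← huniv]; exact Finset.card_le_univ _)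
    by_contra hcon
    interval_cases m <;> omega
  have hk1 : m - 1 ≤ Module.finrank (ZMod 2) W := by
    have : m - 2 < Module.finrank (ZMod 2) W :=
      (Nat.pow_lt_pow_iff_right (le_refl 2)).mp hk
    omega
  have hfin : 2 ^ (m - 1) ≤ 2 ^ Module.finrank (ZMod 2) W :=
    Nat.pow_le_pow_right (by norm_num) hk1
  have hpow : 2 * 2 ^ (m - 1) = 2 ^ m := by
    rw [← pow_succ']
    congr 1
    omega
  rw [hsc, hWcard] at hlow
  omega
end

section
/- Let f(x) = x^d be a power function on the finite field F_{2^m} that is a permutation of F_{2^m}, and suppose f is weakly APN but not APN. Then for every nonzero a ∈ F_{2^m}, Im(f̂_a) is not a coset of an F_2-linear subspace of F_{2^m}. -/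
/-- The finite field `F_{2^m}`. -/
abbrev GF (m : ℕ) := GaloisField 2 m

/-- If a power permutation `f(x) = x^d` of `F_{2^m}` is weakly APN but not APN, then for
every nonzero `a`, `Im(f̂_a)` is not a coset of an `F_2`-linear subspace of `F_{2^m}`. -/
theorem stmt_7 (m d : ℕ)
    (hperm : Function.Bijective (fun x : GF m => x ^ d))
    (hwapn : ∀ a : GF m, a ≠ 0 →
      2 ^ (m - 2) < Nat.card (Set.range fun x : GF m => (x + a) ^ d + x ^ d))
    (hnapn : ¬ ∀ a : GF m, a ≠ 0 → ∀ b : GF m,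
      Nat.card {x : GF m // (x + a) ^ d + x ^ d = b} ≤ 2) :
    ∀ a : GF m, a ≠ 0 →
      ¬ ∃ (W : Submodule (ZMod 2) (GF m)) (w : GF m),
        Set.range (fun x : GF m => (x + a) ^ d + x ^ d) = {y : GF m | ∃ u ∈ W, y = w + u} := by
  classical
  rintro a ha ⟨W, w, hW⟩
  push_neg at hnapn
  obtain ⟨a0, ha0, b0, hb0⟩ := hnapn
  -- hb0 : 2 < Nat.card {x // (x+a0)^d + x^d = b0}
  -- First rule out m = 0.
  rcases eq_or_ne m 0 with hm | hm
  · subst hm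
    have hsurj : Function.Surjective (algebraMap (ZMod 2) (GF 0)) := by
      have h3 : (⊤ : Subalgebra (ZMod 2) (GF 0)) = ⊥ := by
        haveI : Polynomial.IsSplittingField (ZMod 2) (GF 0)
            (Polynomial.X ^ 2 ^ 0 - Polynomial.X : (Polynomial (ZMod 2))) :=
          Polynomial.IsSplittingField.splittingField _
        rw [← Polynomial.IsSplittingField.adjoin_rootSet (GF 0)
          (Polynomial.X ^ 2 ^ 0 - Polynomial.X : (Polynomial (ZMod 2)))]
        have h1 : (Polynomial.X ^ 2 ^ 0 - Polynomial.X : (Polynomial (ZMod 2))) = 0 := by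
          simp
        rw [h1, Polynomial.rootSet_zero, Algebra.adjoin_empty]
      intro x
      have hx : x ∈ (⊥ : Subalgebra (ZMod 2) (GF 0)) := h3 ▸ Algebra.mem_top
      obtain ⟨y, hy⟩ := Algebra.mem_bot.mp hx
      exact ⟨y, hy⟩
    have h2 : Nat.card (GF 0) ≤ 2 := by
      have := Nat.card_le_card_of_surjective _ hsurj
      simpa [Nat.card_eq_fintype_card] using this
    have h3 : Nat.card {x : GF 0 // (x + a0) ^ d + x ^ d = b0} ≤ Nat.card (GF 0) :=
      Nat.card_le_card_of_injective _ Subtype.val_injective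
    omega
  haveI : Fintype (GF m) := Fintype.ofFinite _
  have hchar : ∀ x : GF m, x + x = 0 := fun x => CharTwo.add_self_eq_zero x
  -- transfer the big fiber from `a0` to `a`
  obtain ⟨c, hcne, hca⟩ : ∃ c : GF m, c ≠ 0 ∧ c * a = a0 :=
    ⟨a0 * a⁻¹, mul_ne_zero ha0 (inv_ne_zero ha), by field_simp⟩
  have hcd : (c : GF m) ^ d ≠ 0 := pow_ne_zero _ hcne
  obtain ⟨b, hbdef⟩ : ∃ b : GF m, b0 = c ^ d * b := ⟨b0 / c ^ d, by field_simp⟩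
  have key : ∀ x : GF m, (c * x + a0) ^ d + (c * x) ^ d = c ^ d * ((x + a) ^ d + x ^ d) := by
    intro x
    have h : c * x + a0 = c * (x + a) := by rw [mul_add, hca]
    rw [h, mul_pow, mul_pow, mul_add]
  have hfib : 2 < Nat.card {x : GF m // (x + a) ^ d + x ^ d = b} := by
    have e : {x : GF m // (x + a) ^ d + x ^ d = b} ≃ {x : GF m // (x + a0) ^ d + x ^ d = b0} :=
      (Equiv.mulLeft₀ c hcne).subtypeEquiv (by
        intro x
        simp only [Equiv.mulLeft₀_apply]
        rw [key x, hbdef]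
        exact (mul_right_inj' hcd).symm)
    rw [Nat.card_congr e]
    exact hb0
  -- `b` is in the range
  have hbrange : ∃ x : GF m, (x + a) ^ d + x ^ d = b := by
    by_contra hcon
    push_neg at hcon
    have : IsEmpty {x : GF m // (x + a) ^ d + x ^ d = b} := ⟨fun ⟨x, hx⟩ => hcon x hx⟩
    rw [Nat.card_of_isEmpty] at hfib
    omega
  -- cardinality of the range is `Nat.card W`, a power of two
  haveI : Fintype W := Fintype.ofFinite _
  set k := Module.finrank (ZMod 2) W with hk
  have hWcard : Nat.card W = 2 ^ k := by
    rw [Nat.card_eq_fintype_card, Module.card_eq_pow_finrank (K := ZMod 2) (V := W), ZMod.card]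
  have hScard : Nat.card (Set.range fun x : GF m => (x + a) ^ d + x ^ d) = 2 ^ k := by
    rw [hW]
    have himg : {y : GF m | ∃ u ∈ W, y = w + u} = (fun u => w + u) '' (W : Set (GF m)) := by
      ext y
      simp only [Set.mem_image, Set.mem_setOf_eq, SetLike.mem_coe]
      constructor
      · rintro ⟨u, hu, rfl⟩; exact ⟨u, hu, rfl⟩
      · rintro ⟨u, hu, rfl⟩; exact ⟨u, hu, rfl⟩
    rw [himg, Nat.card_coe_set_eq,
      Set.ncard_image_of_injective _ (add_right_injective w), ← Nat.card_coe_set_eq,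
      ← hWcard]
    rfl
  -- counting: each fiber has at least 2 points, the fiber of `b` at least 3
  set fh : GF m → GF m := fun x => (x + a) ^ d + x ^ d with hfh
  set t := Finset.image fh Finset.univ with ht
  have htotal : Fintype.card (GF m) = ∑ b' ∈ t, (Finset.univ.filter fun x => fh x = b').card :=
    Finset.card_eq_sum_card_fiberwise (fun x _ => Finset.mem_image_of_mem _ (Finset.mem_univ x))
  have hbt : b ∈ t := by
    obtain ⟨x, hx⟩ := hbrange
    exact Finset.mem_image.mpr ⟨x, Finset.mem_univ x, hx⟩
  have hbound : ∀ b' ∈ t, (if b' = b then 3 else 2) ≤ (Finset.univ.filter fun x => fh x = b').card := by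
    intro b' hb'
    by_cases hbb : b' = b
    · rw [if_pos hbb, hbb]
      have h3 : Nat.card {x : GF m // fh x = b} = (Finset.univ.filter fun x => fh x = b).card := by
        rw [Nat.card_eq_fintype_card, Fintype.card_subtype]
      have h4 : 2 < Nat.card {x : GF m // fh x = b} := hfib
      omega
    · rw [if_neg hbb]
      obtain ⟨x, _, hx⟩ := Finset.mem_image.mp hb'
      have hxa : x ≠ x + a := fun h => ha (add_eq_left.mp h.symm)
      have hsub : ({x, x + a} : Finset (GF m)) ⊆ Finset.univ.filter fun y => fh y = b' := by
        intro y hy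
        rcases Finset.mem_insert.mp hy with rfl | hy
        · exact Finset.mem_filter.mpr ⟨Finset.mem_univ _, hx⟩
        · rw [Finset.mem_singleton] at hy
          subst hy
          refine Finset.mem_filter.mpr ⟨Finset.mem_univ _, ?_⟩
          have h5 : fh (x + a) = fh x := by
            show (x + a + a) ^ d + (x + a) ^ d = (x + a) ^ d + x ^ d
            rw [add_assoc, hchar a, add_zero]
            exact add_comm _ _
          rw [h5]
          exact hx
      calc 2 = ({x, x + a} : Finset (GF m)).card := (Finset.card_pair hxa).symm
        _ ≤ _ := Finset.card_le_card hsub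
  have hsumle : ∑ b' ∈ t, (if b' = b then 3 else 2) ≤ Fintype.card (GF m) := by
    rw [htotal]
    exact Finset.sum_le_sum hbound
  have hsumeq : ∑ b' ∈ t, (if b' = b then 3 else 2) = 2 * t.card + 1 := by
    have h1 : ∀ b' : GF m, (if b' = b then 3 else 2) = 2 + (if b' = b then 1 else 0) := by
      intro b'; split <;> rfl
    simp_rw [h1]
    rw [Finset.sum_add_distrib, Finset.sum_const, Finset.sum_ite_eq' t b (fun _ => 1),
      if_pos hbt, smul_eq_mul, mul_comm]
  have htcard : t.card = 2 ^ k := by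
    have : Nat.card (Set.range fh) = t.card := by
      rw [Nat.card_coe_set_eq, Set.ncard_eq_toFinset_card', Set.toFinset_range]
    rw [← this]
    exact hScard
  have hcardF : Fintype.card (GF m) = 2 ^ m := by
    have := GaloisField.card (p := 2) (n := m) hm
    rwa [Nat.card_eq_fintype_card] at this
  -- final arithmetic
  have hwa := hwapn a ha
  rw [hScard] at hwa
  have hmk : m - 2 < k := by
    exact (Nat.pow_lt_pow_iff_right (by norm_num)).mp hwa
  have hmk1 : m ≤ k + 1 := by omega
  have h2m : 2 ^ m ≤ 2 * 2 ^ k := by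
    calc 2 ^ m ≤ 2 ^ (k + 1) := Nat.pow_le_pow_right (by norm_num) hmk1
      _ = 2 * 2 ^ k := by ring
  rw [hsumeq, htcard, hcardF] at hsumle
  omega
end

section
/- Let f : F_2^3 → F_2^3 be a permutation such that n̂(f) = 0, i.e. for every nonzero a ∈ F_2^3 and every nonzero v ∈ F_2^3 the component ⟨f̂_a, v⟩ is not a constant function. Then f is weakly APN, i.e. |Im(f̂_a)| > 2 for every nonzero a. -/
/-- Standard dot product over `F_2`; `⟨g, v⟩ = fun x => dotp v (g x)` is the `v`-component. -/
def dotp {m : ℕ} (v w : BV m) : ZMod 2 := ∑ i, v i * w i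

lemma exists_orth (d : BV 3) : ∃ v : BV 3, v ≠ 0 ∧ dotp v d = 0 := by
  have e : ∀ x : ZMod 2, x = 0 ∨ x = 1 := by decide
  rcases e (d 0) with h0 | h0
  · exact ⟨![1,0,0], by decide, by simp [dotp, Fin.sum_univ_three, h0]⟩
  · rcases e (d 1) with h1 | h1
    · exact ⟨![0,1,0], by decide, by simp [dotp, Fin.sum_univ_three, h1]⟩
    · rcases e (d 2) with h2 | h2
      · exact ⟨![0,0,1], by decide, by simp [dotp, Fin.sum_univ_three, h2]⟩
      · refine ⟨![1,1,0], by decide, ?_⟩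
        have : dotp ![1,1,0] d = d 0 + d 1 := by
          simp [dotp, Fin.sum_univ_three]
        rw [this, h0, h1]
        decide

lemma dotp_add (v a b : BV 3) : dotp v (a + b) = dotp v a + dotp v b := by
  simp [dotp, mul_add, Finset.sum_add_distrib]

/-- A permutation `f` of `F_2^3` with `n̂(f) = 0` (no component of any derivative of `f`
is constant) is weakly APN. -/
theorem stmt_9 (f : BV 3 → BV 3) (hperm : Function.Bijective f)
    (h : ∀ a : BV 3, a ≠ 0 → ∀ v : BV 3, v ≠ 0 → ¬ ∃ c : ZMod 2, ∀ x, dotp v (der f a x) = c) :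
    WeakAPN f := by
  intro a ha
  by_contra hle
  push_neg at hle
  rw [Nat.card_coe_set_eq] at hle
  have hle2 : (Set.range (der f a)).ncard ≤ 2 := by
    have : (2:ℕ) ^ (3 - 2) = 2 := rfl
    omega
  set u := der f a 0 with hu
  by_cases hconst : ∀ x, der f a x = u
  · have hv : ((fun i => if i = 0 then 1 else 0) : BV 3) ≠ 0 := by decide
    exact h a ha _ hv ⟨dotp _ u, fun x => by rw [hconst x]⟩
  · push_neg at hconst
    obtain ⟨x₀, hx₀⟩ := hconst
    set w := der f a x₀ with hw
    have hsub : ∀ y, der f a y = u ∨ der f a y = w := by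
      intro y
      by_contra hy
      push_neg at hy
      have h3 : ({u, w, der f a y} : Set (BV 3)).ncard = 3 :=
        Set.ncard_eq_three.mpr ⟨u, w, der f a y, Ne.symm hx₀, (hy.1).symm, (hy.2).symm, rfl⟩
      have hss : ({u, w, der f a y} : Set (BV 3)) ⊆ Set.range (der f a) := by
        intro t ht
        rcases ht with rfl | rfl | rfl
        · exact ⟨0, rfl⟩
        · exact ⟨x₀, rfl⟩
        · exact ⟨y, rfl⟩
      have := Set.ncard_le_ncard hss (Set.finite_range _)
      omega
    obtain ⟨v, hv0, hvd⟩ := exists_orth (u + w)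
    refine h a ha v hv0 ⟨dotp v u, fun x => ?_⟩
    rcases hsub x with hx | hx
    · rw [hx]
    · rw [hx]
      have hadd := dotp_add v u w
      rw [hvd] at hadd
      have h2 : ∀ x y : ZMod 2, x + y = 0 → y = x := by decide
      exact h2 _ _ hadd.symm
end

section
/- Let f : F_2^4 → F_2^4 be a weakly APN permutation. Then n_3(f) ∈ {14, 15}, i.e. the number of nonzero v ∈ F_2^4 such that the component ⟨f, v⟩ has algebraic degree 3 is either 14 or 15. -/
/-- Algebraic degree of a Boolean function, via its algebraic normal form: the degree is the
maximal size of a monomial `∏_{i ∈ S} x_i` appearing with nonzero (Möbius) coefficient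
`∑_{x : supp x ⊆ S} g x` in the unique reduced multilinear polynomial representing `g`. -/
def algDeg {m : ℕ} (g : BV m → ZMod 2) : ℕ :=
  Finset.sup (Finset.univ.filter fun S : Finset (Fin m) =>
    (∑ x ∈ Finset.univ.filter (fun x : BV m => ∀ i, x i ≠ 0 → i ∈ S), g x) ≠ 0)
    Finset.card

/-- `n_3(f)`: the number of nonzero `v` whose component `⟨f, v⟩` has algebraic degree 3. -/
noncomputable def n3 {m : ℕ} (f : BV m → BV m) : ℕ :=
  Nat.card {v : BV m // v ≠ 0 ∧ algDeg (fun x => dotp v (f x)) = 3}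

namespace S11
open Finset

def coeff (S : Finset (Fin 4)) (g : BV 4 → ZMod 2) : ZMod 2 :=
  ∑ x ∈ Finset.univ.filter (fun x : BV 4 => ∀ i, x i ≠ 0 → i ∈ S), g x

def supp (x : BV 4) : Finset (Fin 4) := Finset.univ.filter (fun i => x i ≠ 0)

lemma supp_subset_iff (x : BV 4) (S : Finset (Fin 4)) :
    supp x ⊆ S ↔ ∀ i, x i ≠ 0 → i ∈ S := by
  simp [supp, subset_iff]

lemma zmod2_cases : ∀ u : ZMod 2, u = 0 ∨ u = 1 := by decide

lemma eq_of_supp_eq {x y : BV 4} (h : supp x = supp y) : x = y := by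
  funext i
  have hx := zmod2_cases (x i); have hy := zmod2_cases (y i)
  have := Finset.ext_iff.mp h i
  simp [supp] at this
  rcases hx with hx | hx <;> rcases hy with hy | hy <;> simp [hx, hy] at this ⊢

lemma anf (g : BV 4 → ZMod 2) (x : BV 4) :
    g x = ∑ S ∈ (supp x).powerset, coeff S g := by
  have step1 : ∀ S : Finset (Fin 4), coeff S g
      = ∑ y : BV 4, if supp y ⊆ S then g y else 0 := by
    intro S
    rw [coeff, Finset.sum_filter]
    exact Finset.sum_congr rfl (fun y _ =>
      if_congr (supp_subset_iff y S).symm rfl rfl)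
  calc g x = ∑ y : BV 4, if supp y = supp x then g y else 0 := by
        have : ∀ y : BV 4, (if supp y = supp x then g y else 0)
            = if y = x then g y else 0 := by
          intro y
          refine if_congr ⟨fun h => eq_of_supp_eq h, fun h => by rw [h]⟩ rfl rfl
        rw [Finset.sum_congr rfl (fun y _ => this y), Finset.sum_ite_eq' Finset.univ x g]
        simp
    _ = ∑ S ∈ (supp x).powerset, coeff S g := by
        simp only [step1]
        rw [Finset.sum_comm]
        refine Finset.sum_congr rfl (fun y _ => ?_)
        rw [← Finset.sum_filter, Finset.sum_const, ← Finset.Icc_eq_filter_powerset]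
        by_cases hsub : supp y ⊆ supp x
        · rw [Finset.card_Icc_finset hsub]
          by_cases heq : supp y = supp x
          · simp [heq]
          · have hlt : (supp y).card < (supp x).card :=
              Finset.card_lt_card (lt_of_le_of_ne hsub heq)
            have hk : (supp x).card - (supp y).card ≠ 0 := by omega
            rw [if_neg heq]
            rw [nsmul_eq_mul, Nat.cast_pow]
            have h2 : ((2:ℕ) : ZMod 2) = 0 := by decide
            rw [h2, zero_pow hk, zero_mul]
        · have : Finset.Icc (supp y) (supp x) = ∅ := Finset.Icc_eq_empty hsub
          rw [this]
          have : supp y ≠ supp x := fun h => hsub (h ▸ le_refl _)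
          simp [this]
def mono (S : Finset (Fin 4)) (x : BV 4) : ZMod 2 := ∏ i ∈ S, x i

lemma mono_eq (S : Finset (Fin 4)) (x : BV 4) :
    mono S x = if S ⊆ supp x then 1 else 0 := by
  by_cases h : S ⊆ supp x
  · rw [if_pos h]
    refine Finset.prod_eq_one (fun i hi => ?_)
    have := h hi
    simp [supp] at this
    rcases zmod2_cases (x i) with h0 | h1
    · exact absurd h0 this
    · exact h1
  · rw [if_neg h]
    obtain ⟨i, hiS, hix⟩ : ∃ i ∈ S, i ∉ supp x := by
      by_contra hc
      push_neg at hc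
      exact h hc
    have hx0 : x i = 0 := by
      by_contra hne
      exact hix (by simp [supp, hne])
    exact Finset.prod_eq_zero hiS hx0

lemma anf_mono (g : BV 4 → ZMod 2) (x : BV 4) :
    g x = ∑ S : Finset (Fin 4), coeff S g * mono S x := by
  rw [anf g x]
  rw [← Finset.sum_filter_add_sum_filter_not Finset.univ (fun S => S ⊆ supp x)]
  have h1 : ∑ S ∈ Finset.univ.filter (fun S => S ⊆ supp x), coeff S g * mono S x
      = ∑ S ∈ (supp x).powerset, coeff S g := by
    refine Finset.sum_congr (by ext S; simp) (fun S hS => ?_)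
    rw [mono_eq, if_pos (Finset.mem_powerset.mp hS), mul_one]
  have h2 : ∑ S ∈ Finset.univ.filter (fun S => ¬ S ⊆ supp x), coeff S g * mono S x = 0 := by
    refine Finset.sum_eq_zero (fun S hS => ?_)
    simp only [Finset.mem_filter] at hS
    rw [mono_eq, if_neg hS.2, mul_zero]
  rw [h1, h2, add_zero]


lemma coeff_eq_zero_of_deg_lt {g : BV 4 → ZMod 2} {n : ℕ} (h : algDeg g ≤ n)
    {S : Finset (Fin 4)} (hcard : n < S.card) : coeff S g = 0 := by
  by_contra hc
  have hmem : S ∈ Finset.univ.filter (fun S : Finset (Fin 4) =>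
      (∑ x ∈ Finset.univ.filter (fun x : BV 4 => ∀ i, x i ≠ 0 → i ∈ S), g x) ≠ 0) :=
    Finset.mem_filter.mpr ⟨Finset.mem_univ _, hc⟩
  have h1 : S.card ≤ algDeg g := by
    unfold algDeg
    exact Finset.le_sup (f := Finset.card) hmem
  have h2 : S.card <= n := le_trans h1 h
  omega

def Bq (q : BV 4 → ZMod 2) (a b : BV 4) : ZMod 2 := q (a + b) + q a + q b + q 0

lemma Bq_symm (q : BV 4 → ZMod 2) (a b : BV 4) : Bq q a b = Bq q b a := by
  unfold Bq
  rw [add_comm a b]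
  ring

lemma Bq_self (q : BV 4 → ZMod 2) (a : BV 4) : Bq q a a = 0 := by
  unfold Bq
  have : a + a = 0 := by
    funext i; exact CharTwo.add_self_eq_zero (a i)
  rw [this]
  have h4 : ∀ u v : ZMod 2, u + v + v + u = 0 := by decide
  exact h4 _ _

def prs : Fin 6 → Fin 4 × Fin 4 := ![(0,1),(0,2),(0,3),(1,2),(1,3),(2,3)]

def bform (c : Fin 6 → ZMod 2) (a b : BV 4) : ZMod 2 :=
  ∑ k, c k * (a (prs k).1 * b (prs k).2 + a (prs k).2 * b (prs k).1)

lemma bform_add_left (c : Fin 6 → ZMod 2) (a a' b : BV 4) :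
    bform c (a + a') b = bform c a b + bform c a' b := by
  unfold bform
  rw [← Finset.sum_add_distrib]
  refine Finset.sum_congr rfl (fun k _ => ?_)
  simp only [Pi.add_apply]
  ring

lemma mono_pair (i j : Fin 4) (hij : i ≠ j) (x : BV 4) :
    mono {i, j} x = x i * x j := by
  rw [mono, Finset.prod_insert (by simp [hij]), Finset.prod_singleton]

lemma Bq_eq_bform {q : BV 4 → ZMod 2} (hdeg : algDeg q ≤ 2) (a b : BV 4) :
    Bq q a b = bform (fun k => coeff {(prs k).1, (prs k).2} q) a b := by
  have hquad : ∀ A B C D : ZMod 2, (A+B)*(C+D)+A*C+B*D+(0:ZMod 2)*0 = A*D+B*C := by decide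
  calc Bq q a b
      = ∑ S : Finset (Fin 4),
          coeff S q * (mono S (a+b) + mono S a + mono S b + mono S 0) := by
        rw [Bq, anf_mono q (a+b), anf_mono q a, anf_mono q b, anf_mono q 0,
          ← Finset.sum_add_distrib, ← Finset.sum_add_distrib, ← Finset.sum_add_distrib]
        exact Finset.sum_congr rfl (fun S _ => by ring)
    _ = ∑ S ∈ Finset.univ.filter (fun S : Finset (Fin 4) => S.card = 2),
          coeff S q * (mono S (a+b) + mono S a + mono S b + mono S 0) := by
        rw [← Finset.sum_filter_add_sum_filter_not Finset.univ
          (fun S : Finset (Fin 4) => S.card = 2)]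
        have hz : ∑ S ∈ Finset.univ.filter (fun S : Finset (Fin 4) => ¬ S.card = 2),
            coeff S q * (mono S (a+b) + mono S a + mono S b + mono S 0) = 0 := by
          refine Finset.sum_eq_zero (fun S hS => ?_)
          simp only [Finset.mem_filter] at hS
          have hle : S.card ≤ 4 := by
            have := Finset.card_le_univ S
            simpa using this
          obtain h0 | h1 | h3 : S.card = 0 ∨ S.card = 1 ∨ 2 < S.card := by omega
          · obtain rfl := Finset.card_eq_zero.mp h0
            have : ∀ x : BV 4, mono ∅ x = 1 := fun x => by rw [mono, Finset.prod_empty]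
            rw [this, this, this, this]
            have : ∀ u : ZMod 2, u * (1+1+1+1) = 0 := by decide
            exact this _
          · obtain ⟨i, rfl⟩ := Finset.card_eq_one.mp h1
            have : ∀ x : BV 4, mono {i} x = x i := fun x => by rw [mono, Finset.prod_singleton]
            rw [this, this, this, this]
            simp only [Pi.add_apply, Pi.zero_apply]
            have : ∀ u A B : ZMod 2, u * ((A + B) + A + B + 0) = 0 := by decide
            exact this _ _ _
          · rw [coeff_eq_zero_of_deg_lt hdeg h3, zero_mul]
        rw [hz, add_zero]
    _ = bform (fun k => coeff {(prs k).1, (prs k).2} q) a b := by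
        have hfil : Finset.univ.filter (fun S : Finset (Fin 4) => S.card = 2)
            = ({{0,1},{0,2},{0,3},{1,2},{1,3},{2,3}} : Finset (Finset (Fin 4))) := by decide
        rw [hfil]
        rw [show ({{0,1},{0,2},{0,3},{1,2},{1,3},{2,3}} : Finset (Finset (Fin 4)))
          = insert {0,1} (insert {0,2} (insert {0,3} (insert {1,2}
            (insert {1,3} ({{2,3}} : Finset (Finset (Fin 4))))))) from rfl]
        rw [Finset.sum_insert (by decide), Finset.sum_insert (by decide),
          Finset.sum_insert (by decide), Finset.sum_insert (by decide),
          Finset.sum_insert (by decide), Finset.sum_singleton]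
        unfold bform
        rw [Fin.sum_univ_six]
        simp only [show prs 0 = ((0 : Fin 4), (1 : Fin 4)) from rfl,
          show prs 1 = ((0 : Fin 4), (2 : Fin 4)) from rfl,
          show prs 2 = ((0 : Fin 4), (3 : Fin 4)) from rfl,
          show prs 3 = ((1 : Fin 4), (2 : Fin 4)) from rfl,
          show prs 4 = ((1 : Fin 4), (3 : Fin 4)) from rfl,
          show prs 5 = ((2 : Fin 4), (3 : Fin 4)) from rfl]
        simp only [mono_pair 0 1 (by decide), mono_pair 0 2 (by decide),
          mono_pair 0 3 (by decide), mono_pair 1 2 (by decide), mono_pair 1 3 (by decide),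
          mono_pair 2 3 (by decide), Pi.add_apply, Pi.zero_apply]
        simp only [hquad]
        ring
lemma bform_zero_left (c : Fin 6 → ZMod 2) (b : BV 4) : bform c 0 b = 0 := by
  unfold bform
  refine Finset.sum_eq_zero (fun k _ => ?_)
  simp

lemma bform_symm (c : Fin 6 → ZMod 2) (a b : BV 4) : bform c a b = bform c b a := by
  unfold bform
  refine Finset.sum_congr rfl (fun k _ => ?_)
  ring

lemma bform_add_right (c : Fin 6 → ZMod 2) (a b b' : BV 4) :
    bform c a (b + b') = bform c a b + bform c a b' := by
  rw [bform_symm, bform_add_left, bform_symm c b a, bform_symm c b' a]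

lemma bform_c_add (c1 c2 : Fin 6 → ZMod 2) (a b : BV 4) :
    bform (fun k => c1 k + c2 k) a b = bform c1 a b + bform c2 a b := by
  unfold bform
  rw [← Finset.sum_add_distrib]
  exact Finset.sum_congr rfl (fun k _ => by ring)

lemma Bq_add_left {q : BV 4 → ZMod 2} (hdeg : algDeg q ≤ 2) (a a' b : BV 4) :
    Bq q (a + a') b = Bq q a b + Bq q a' b := by
  rw [Bq_eq_bform hdeg, Bq_eq_bform hdeg, Bq_eq_bform hdeg, bform_add_left]

lemma Bq_add_right {q : BV 4 → ZMod 2} (hdeg : algDeg q ≤ 2) (a b b' : BV 4) :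
    Bq q a (b + b') = Bq q a b + Bq q a b' := by
  rw [Bq_symm, Bq_add_left hdeg, Bq_symm q b a, Bq_symm q b' a]

/-! ### dot product lemmas -/


lemma dotp_add_left (v w y : BV 4) : dotp (v + w) y = dotp v y + dotp w y := by
  unfold dotp
  rw [← Finset.sum_add_distrib]
  exact Finset.sum_congr rfl (fun i _ => by simp [add_mul])

lemma dotp_add_right (v w y : BV 4) : dotp v (w + y) = dotp v w + dotp v y := by
  unfold dotp
  rw [← Finset.sum_add_distrib]
  exact Finset.sum_congr rfl (fun i _ => by simp [mul_add])

lemma exists_dotp_one : ∀ v : BV 4, v ≠ 0 → ∃ y : BV 4, dotp v y = 1 := by decide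

set_option maxHeartbeats 1000000 in
set_option maxRecDepth 100000 in
lemma sum_dotp_zero : ∀ v : BV 4, ∑ y : BV 4, dotp v y = 0 := by decide

/-! ### character sums -/

def chi : ZMod 2 → ℤ := fun u => if u = 0 then 1 else -1

lemma chi_add : ∀ u w : ZMod 2, chi (u + w) = chi u * chi w := by decide

lemma chi_add_one : ∀ u : ZMod 2, chi (u + 1) = - chi u := by decide

lemma chi_pair (g : BV 4 → ZMod 2) (y0 : BV 4) (hg : ∀ y, g (y + y0) = g y + 1) :
    ∑ y : BV 4, chi (g y) = 0 := by
  have h1 : ∑ y : BV 4, chi (g (y + y0)) = ∑ y : BV 4, chi (g y) :=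
    Fintype.sum_equiv (Equiv.addRight y0) (fun y => chi (g (y + y0))) (fun z => chi (g z))
      (fun y => rfl)
  have h2 : ∑ y : BV 4, chi (g (y + y0)) = - ∑ y : BV 4, chi (g y) := by
    rw [Finset.sum_congr rfl (fun y _ => by rw [hg y, chi_add_one]), Finset.sum_neg_distrib]
  have := h1.symm.trans h2
  omega

lemma card_univ_bv : (Finset.univ : Finset (BV 4)).card = 16 := by decide

/-- Lemma A: a balanced component of degree ≤ 2 has a nonzero radical element. -/
lemma lemA {f : BV 4 → BV 4} (hperm : Function.Bijective f) {v : BV 4} (hv : v ≠ 0)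
    (hdeg : algDeg (fun x => dotp v (f x)) ≤ 2) :
    ∃ a : BV 4, a ≠ 0 ∧ ∀ x, Bq (fun x => dotp v (f x)) a x = 0 := by
  set q : BV 4 → ZMod 2 := fun x => dotp v (f x) with hq
  by_contra hcon
  push_neg at hcon
  have hcon' : ∀ a : BV 4, a ≠ 0 → ∃ x, Bq q a x ≠ 0 := hcon
  set s : ℤ := ∑ x : BV 4, chi (q x) with hs
  have hs0 : s = 0 := by
    obtain ⟨y0, hy0⟩ := exists_dotp_one v hv
    have h1 : s = ∑ y : BV 4, chi (dotp v y) :=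
      Fintype.sum_bijective f hperm _ _ (fun x => rfl)
    rw [h1]
    refine chi_pair (fun y => dotp v y) y0 (fun y => ?_)
    show dotp v (y + y0) = dotp v y + 1
    rw [dotp_add_right, hy0]
  have harr : ∀ A B C D : ZMod 2, C + A = (A + B + C + D) + (B + D) := by decide
  have hs16 : s * s = 16 := by
    have e1 : s * s = ∑ x : BV 4, ∑ y : BV 4, chi (q x + q y) := by
      rw [hs, Finset.sum_mul_sum]
      exact Finset.sum_congr rfl (fun x _ => Finset.sum_congr rfl
        (fun y _ => (chi_add (q x) (q y)).symm))
    have e2 : ∀ x : BV 4, ∑ y : BV 4, chi (q x + q y)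
        = ∑ a : BV 4, chi (Bq q a x + (q a + q 0)) := by
      intro x
      have := Fintype.sum_equiv (Equiv.addLeft x) (fun a : BV 4 => chi (q x + q (x + a)))
        (fun y : BV 4 => chi (q x + q y)) (fun a => rfl)
      rw [← this]
      refine Finset.sum_congr rfl (fun a _ => ?_)
      show chi (q x + q (x + a)) = chi (Bq q a x + (q a + q 0))
      congr 1
      have hBq : Bq q a x = q (x + a) + q a + q x + q 0 := by
        rw [Bq, add_comm a x]
      rw [hBq]
      exact harr (q (x + a)) (q a) (q x) (q 0)
    rw [e1, Finset.sum_congr rfl (fun x _ => e2 x), Finset.sum_comm]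
    rw [Finset.sum_eq_single_of_mem (0 : BV 4) (Finset.mem_univ 0)]
    · have hB0 : ∀ x : BV 4, Bq q 0 x + (q 0 + q 0) = 0 := by
        intro x
        have h0x : (0 : BV 4) + x = x := by rw [zero_add]
        rw [Bq, h0x]
        have : ∀ A B : ZMod 2, (A + B + A + B) + (B + B) = 0 := by decide
        exact this (q x) (q 0)
      rw [Finset.sum_congr rfl (fun x _ => by rw [hB0 x])]
      rw [Finset.sum_const, card_univ_bv]
      rfl
    · intro a _ ha
      obtain ⟨x0, hx0⟩ := hcon' a ha
      have hx1 : Bq q a x0 = 1 := by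
        rcases zmod2_cases (Bq q a x0) with h | h
        · exact absurd h hx0
        · exact h
      refine chi_pair (fun x => Bq q a x + (q a + q 0)) x0 (fun x => ?_)
      show Bq q a (x + x0) + (q a + q 0) = Bq q a x + (q a + q 0) + 1
      rw [Bq_symm q a (x + x0), Bq_add_left hdeg, Bq_symm q x a, Bq_symm q x0 a, hx1]
      ring
  rw [hs0] at hs16
  norm_num at hs16
/-! ### the radical submodule and the pairing argument -/

def radS (c : Fin 6 → ZMod 2) : Submodule (ZMod 2) (BV 4) where
  carrier := {a | ∀ x, bform c a x = 0}
  add_mem' := by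
    intro a b ha hb x
    rw [bform_add_left, ha x, hb x, add_zero]
  zero_mem' := fun x => bform_zero_left c x
  smul_mem' := by
    intro r a ha
    rcases zmod2_cases r with h | h
    · rw [h, zero_smul]
      exact fun x => bform_zero_left c x
    · rw [h, one_smul]
      exact ha

set_option maxHeartbeats 4000000 in
set_option maxRecDepth 100000 in
lemma L1 : ∀ c : Fin 6 → ZMod 2, ∀ a : BV 4, a ≠ 0 → (∀ x, bform c a x = 0) →
    ∃ b : BV 4, b ≠ 0 ∧ b ≠ a ∧ ∀ x, bform c b x = 0 := by decide

lemma finrank_radS_ge {c : Fin 6 → ZMod 2} {a : BV 4} (ha : a ≠ 0)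
    (hrad : ∀ x, bform c a x = 0) : 2 ≤ Module.finrank (ZMod 2) (radS c) := by
  haveI : Fintype (radS c) := Fintype.ofFinite _
  obtain ⟨b, hb0, hba, hbrad⟩ := L1 c a ha hrad
  have hmem_a : a ∈ radS c := hrad
  have hmem_b : b ∈ radS c := hbrad
  have d01 : (⟨0, (radS c).zero_mem⟩ : radS c) ≠ ⟨a, hmem_a⟩ :=
    fun h => ha (congrArg Subtype.val h).symm
  have d02 : (⟨0, (radS c).zero_mem⟩ : radS c) ≠ ⟨b, hmem_b⟩ :=
    fun h => hb0 (congrArg Subtype.val h).symm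
  have d12 : (⟨a, hmem_a⟩ : radS c) ≠ ⟨b, hmem_b⟩ :=
    fun h => hba (congrArg Subtype.val h).symm
  have hcard3 : 3 ≤ Fintype.card (radS c) := by
    have h3 : ({⟨0, (radS c).zero_mem⟩, ⟨a, hmem_a⟩, ⟨b, hmem_b⟩} :
        Finset (radS c)).card = 3 :=
      Finset.card_eq_three.mpr ⟨_, _, _, d01, d02, d12, rfl⟩
    calc 3 = ({⟨0, (radS c).zero_mem⟩, ⟨a, hmem_a⟩, ⟨b, hmem_b⟩} :
        Finset (radS c)).card := h3.symm
      _ ≤ Fintype.card (radS c) := Finset.card_le_univ _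
  have hpow : Fintype.card (radS c) = 2 ^ Module.finrank (ZMod 2) (radS c) := by
    have := Module.card_eq_pow_finrank (K := ZMod 2) (V := radS c)
    rwa [ZMod.card] at this
  by_contra hlt
  push_neg at hlt
  have h01 : Module.finrank (ZMod 2) (radS c) = 0 ∨
      Module.finrank (ZMod 2) (radS c) = 1 := by omega
  rcases h01 with h | h <;> rw [h] at hpow <;> norm_num at hpow <;> omega

lemma finrank_bv : Module.finrank (ZMod 2) (BV 4) = 4 := by
  rw [Module.finrank_pi]
  simp

lemma pair_main {c1 c2 : Fin 6 → ZMod 2}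
    (h1 : ∃ a : BV 4, a ≠ 0 ∧ ∀ x, bform c1 a x = 0)
    (h2 : ∃ a : BV 4, a ≠ 0 ∧ ∀ x, bform c2 a x = 0)
    (h3 : ∃ a : BV 4, a ≠ 0 ∧ ∀ x, bform c1 a x + bform c2 a x = 0) :
    ∃ a : BV 4, a ≠ 0 ∧ (∀ x, bform c1 a x = 0) ∧ (∀ x, bform c2 a x = 0) := by
  by_contra hcon
  push_neg at hcon
  obtain ⟨a1, ha1, hrad1⟩ := h1
  obtain ⟨a2, ha2, hrad2⟩ := h2
  obtain ⟨a3, ha3, hrad3⟩ := h3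
  -- the intersection is trivial
  have hbot : radS c1 ⊓ radS c2 = ⊥ := by
    rw [Submodule.eq_bot_iff]
    intro a ⟨hm1, hm2⟩
    by_contra h0
    obtain ⟨x, hx⟩ := hcon a h0 hm1
    exact hx (hm2 x)
  -- hence the sum is everything
  have hsup : radS c1 ⊔ radS c2 = ⊤ := by
    have hr1 := finrank_radS_ge ha1 hrad1
    have hr2 := finrank_radS_ge ha2 hrad2
    have heq := Submodule.finrank_sup_add_finrank_inf_eq (radS c1) (radS c2)
    rw [hbot] at heq
    rw [finrank_bot] at heq
    have hle : Module.finrank (ZMod 2) ((radS c1 ⊔ radS c2 : Submodule (ZMod 2) (BV 4)))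
        ≤ 4 := le_trans (Submodule.finrank_le _) (le_of_eq finrank_bv)
    apply Submodule.eq_top_of_finrank_eq
    rw [finrank_bv]
    omega
  -- a3 is in both radicals, contradiction
  have hmem : ∀ x : BV 4, bform c1 a3 x = 0 ∧ bform c2 a3 x = 0 := by
    intro x
    have hx : x ∈ radS c1 ⊔ radS c2 := by rw [hsup]; exact Submodule.mem_top
    obtain ⟨u, hu, w, hw, rfl⟩ := Submodule.mem_sup.mp hx
    have hu1 : bform c1 a3 u = 0 := by rw [bform_symm]; exact hu a3
    have hw2 : bform c2 a3 w = 0 := by rw [bform_symm]; exact hw a3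
    have hsum_u : bform c1 a3 u + bform c2 a3 u = 0 := hrad3 u
    have hsum_w : bform c1 a3 w + bform c2 a3 w = 0 := hrad3 w
    have hu2 : bform c2 a3 u = 0 := by
      rw [hu1, zero_add] at hsum_u; exact hsum_u
    have hw1 : bform c1 a3 w = 0 := by
      rcases zmod2_cases (bform c1 a3 w) with h | h
      · exact h
      · rw [h, hw2, add_zero] at hsum_w
        exact absurd hsum_w one_ne_zero
    constructor
    · rw [bform_add_right, hu1, hw1, add_zero]
    · rw [bform_add_right, hu2, hw2, add_zero]
  have : a3 ∈ radS c1 ⊓ radS c2 := ⟨fun x => (hmem x).1, fun x => (hmem x).2⟩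
  rw [hbot] at this
  exact ha3 this
/-! ### degree lemmas and final assembly -/

lemma coeff_add (q1 q2 : BV 4 → ZMod 2) (S : Finset (Fin 4)) :
    coeff S (fun x => q1 x + q2 x) = coeff S q1 + coeff S q2 := by
  unfold coeff
  rw [← Finset.sum_add_distrib]

lemma algDeg_le_two_of_coeff {g : BV 4 → ZMod 2}
    (h : ∀ S : Finset (Fin 4), 2 < S.card → coeff S g = 0) : algDeg g ≤ 2 := by
  refine Finset.sup_le (fun S hS => ?_)
  rw [Finset.mem_filter] at hS
  by_contra hc
  push_neg at hc
  exact hS.2 (h S hc)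

set_option maxHeartbeats 4000000 in
set_option maxRecDepth 1000000 in
lemma card_pair_filter_aux : ∀ v1 v2 : BV 4, ∀ e1 e2 : ZMod 2, v1 = 0 ∨ v2 = 0 ∨ v1 = v2 ∨
    (Finset.univ.filter (fun y : BV 4 => dotp v1 y = e1 ∧ dotp v2 y = e2)).card = 4 := by
  decide

lemma card_pair_filter (v1 v2 : BV 4) (h1 : v1 ≠ 0) (h2 : v2 ≠ 0) (h12 : v1 ≠ v2)
    (e1 e2 : ZMod 2) :
    (Finset.univ.filter (fun y : BV 4 => dotp v1 y = e1 ∧ dotp v2 y = e2)).card = 4 := by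
  rcases card_pair_filter_aux v1 v2 e1 e2 with h | h | h | h
  · exact absurd h h1
  · exact absurd h h2
  · exact absurd h h12
  · exact h

lemma card_nonzero : (Finset.univ.filter (fun v : BV 4 => v ≠ 0)).card = 15 := by decide

set_option maxHeartbeats 1000000 in
lemma deg_le_three {f : BV 4 → BV 4} (hperm : Function.Bijective f) (v : BV 4) :
    algDeg (fun x => dotp v (f x)) ≤ 3 := by
  refine Finset.sup_le (fun S hS => ?_)
  rw [Finset.mem_filter] at hS
  by_contra hc
  push_neg at hc
  have hle : S.card ≤ 4 := by
    have := Finset.card_le_univ S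
    simpa using this
  have hS4 : S = Finset.univ := by
    apply Finset.eq_univ_of_card
    simp
    omega
  apply hS.2
  rw [hS4]
  rw [Finset.filter_true_of_mem (fun x _ => fun i _ => Finset.mem_univ i)]
  rw [Fintype.sum_bijective f hperm _ _ (fun x => rfl)]
  exact sum_dotp_zero v

set_option maxHeartbeats 2000000 in
lemma hkey {f : BV 4 → BV 4} (hperm : Function.Bijective f) (h : WeakAPN f)
    (v1 v2 : BV 4) (hv1 : v1 ≠ 0) (hv2 : v2 ≠ 0) (hne : v1 ≠ v2)
    (hd1 : algDeg (fun x => dotp v1 (f x)) ≤ 2)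
    (hd2 : algDeg (fun x => dotp v2 (f x)) ≤ 2) : False := by
  set q1 : BV 4 → ZMod 2 := fun x => dotp v1 (f x) with hq1def
  set q2 : BV 4 → ZMod 2 := fun x => dotp v2 (f x) with hq2def
  have hv3 : v1 + v2 ≠ 0 := by
    intro hc
    apply hne
    funext i
    have hci := congrFun hc i
    have h2 : ∀ u w : ZMod 2, u + w = 0 → u = w := by decide
    exact h2 _ _ hci
  have hq3 : (fun x => dotp (v1 + v2) (f x)) = fun x => q1 x + q2 x := by
    funext x
    rw [dotp_add_left]
  have hd3 : algDeg (fun x => dotp (v1 + v2) (f x)) ≤ 2 := by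
    rw [hq3]
    refine algDeg_le_two_of_coeff (fun S hS => ?_)
    rw [coeff_add, coeff_eq_zero_of_deg_lt hd1 hS, coeff_eq_zero_of_deg_lt hd2 hS, add_zero]
  set c1 : Fin 6 → ZMod 2 := fun k => coeff {(prs k).1, (prs k).2} q1 with hc1def
  set c2 : Fin 6 → ZMod 2 := fun k => coeff {(prs k).1, (prs k).2} q2 with hc2def
  have hb1 : ∃ a : BV 4, a ≠ 0 ∧ ∀ x, bform c1 a x = 0 := by
    obtain ⟨a, ha, hr⟩ := lemA hperm hv1 hd1
    exact ⟨a, ha, fun x => by rw [← Bq_eq_bform hd1]; exact hr x⟩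
  have hb2 : ∃ a : BV 4, a ≠ 0 ∧ ∀ x, bform c2 a x = 0 := by
    obtain ⟨a, ha, hr⟩ := lemA hperm hv2 hd2
    exact ⟨a, ha, fun x => by rw [← Bq_eq_bform hd2]; exact hr x⟩
  have hBsplit : ∀ a x : BV 4, Bq (fun x => q1 x + q2 x) a x = Bq q1 a x + Bq q2 a x := by
    intro a x
    unfold Bq
    ring
  have hb3 : ∃ a : BV 4, a ≠ 0 ∧ ∀ x, bform c1 a x + bform c2 a x = 0 := by
    obtain ⟨a, ha, hr⟩ := lemA hperm hv3 hd3
    refine ⟨a, ha, fun x => ?_⟩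
    have := hr x
    rw [hq3] at this
    rw [hBsplit, Bq_eq_bform hd1, Bq_eq_bform hd2] at this
    exact this
  obtain ⟨a, ha0, hB1, hB2⟩ := pair_main hb1 hb2 hb3
  have hreduce : ∀ A B C D : ZMod 2, A + B + C + D = 0 → C + A = B + D := by decide
  have hder1 : ∀ x, dotp v1 (der f a x) = q1 a + q1 0 := by
    intro x
    have hB : Bq q1 a x = 0 := by rw [Bq_eq_bform hd1]; exact hB1 x
    rw [Bq, add_comm a x] at hB
    have := hreduce _ _ _ _ hB
    calc dotp v1 (der f a x) = q1 (x + a) + q1 x := by rw [der, dotp_add_right]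
      _ = q1 a + q1 0 := by
          have hcomm : ∀ A C : ZMod 2, C + A = A + C := fun A C => add_comm C A
          rw [← this]
          exact hcomm _ _
  have hder2 : ∀ x, dotp v2 (der f a x) = q2 a + q2 0 := by
    intro x
    have hB : Bq q2 a x = 0 := by rw [Bq_eq_bform hd2]; exact hB2 x
    rw [Bq, add_comm a x] at hB
    have := hreduce _ _ _ _ hB
    calc dotp v2 (der f a x) = q2 (x + a) + q2 x := by rw [der, dotp_add_right]
      _ = q2 a + q2 0 := by
          rw [← this]
          exact add_comm _ _
  set E := Finset.univ.filter
    (fun y : BV 4 => dotp v1 y = q1 a + q1 0 ∧ dotp v2 y = q2 a + q2 0) with hEdef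
  have hEcard : E.card = 4 := card_pair_filter v1 v2 hv1 hv2 hne _ _
  have hsub : Set.range (der f a) ⊆ (E : Set (BV 4)) := by
    rintro y ⟨x, rfl⟩
    rw [Finset.mem_coe, hEdef, Finset.mem_filter]
    exact ⟨Finset.mem_univ _, hder1 x, hder2 x⟩
  have hcard : Nat.card (Set.range (der f a)) ≤ 4 := by
    calc Nat.card (Set.range (der f a)) = (Set.range (der f a)).ncard :=
        Nat.card_coe_set_eq _
      _ ≤ (↑E : Set (BV 4)).ncard := Set.ncard_le_ncard hsub (Set.toFinite _)
      _ = E.card := Set.ncard_coe_finset E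
      _ = 4 := hEcard
  have hwa := h a ha0
  have h4 : (2:ℕ) ^ (4 - 2) = 4 := rfl
  rw [h4] at hwa
  omega

end S11

set_option maxHeartbeats 2000000 in
/-- A weakly APN permutation of `F_2^4` has `n_3(f) ∈ {14, 15}`. -/
theorem stmt_11 (f : BV 4 → BV 4) (hperm : Function.Bijective f) (h : WeakAPN f) :
    n3 f = 14 ∨ n3 f = 15 := by
  classical
  have hn3 : n3 f = (Finset.univ.filter (fun v : BV 4 => v ≠ 0 ∧
      algDeg (fun x => dotp v (f x)) = 3)).card := by
    rw [n3, Nat.card_eq_fintype_card]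
    convert Fintype.card_subtype _
  have hf1 : (Finset.univ.filter (fun v : BV 4 => v ≠ 0 ∧
        algDeg (fun x => dotp v (f x)) = 3))
      = (Finset.univ.filter (fun v : BV 4 => v ≠ 0)).filter
        (fun v => algDeg (fun x => dotp v (f x)) = 3) := by
    rw [Finset.filter_filter]
  have hf2 : (Finset.univ.filter (fun v : BV 4 => v ≠ 0 ∧
        ¬ algDeg (fun x => dotp v (f x)) = 3))
      = (Finset.univ.filter (fun v : BV 4 => v ≠ 0)).filter
        (fun v => ¬ algDeg (fun x => dotp v (f x)) = 3) := by
    rw [Finset.filter_filter]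
  have hsplit : (Finset.univ.filter (fun v : BV 4 => v ≠ 0 ∧
        algDeg (fun x => dotp v (f x)) = 3)).card
      + (Finset.univ.filter (fun v : BV 4 => v ≠ 0 ∧
        ¬ algDeg (fun x => dotp v (f x)) = 3)).card = 15 := by
    rw [hf1, hf2, Finset.card_filter_add_card_filter_not, S11.card_nonzero]
  have hle : (Finset.univ.filter (fun v : BV 4 => v ≠ 0 ∧
      ¬ algDeg (fun x => dotp v (f x)) = 3)).card ≤ 1 := by
    by_contra hc
    push_neg at hc
    obtain ⟨v1, hv1m, v2, hv2m, hne⟩ := Finset.one_lt_card.mp hc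
    rw [Finset.mem_filter] at hv1m hv2m
    have hd1 : algDeg (fun x => dotp v1 (f x)) ≤ 2 := by
      have := S11.deg_le_three hperm v1
      have := hv1m.2.2
      omega
    have hd2 : algDeg (fun x => dotp v2 (f x)) ≤ 2 := by
      have := S11.deg_le_three hperm v2
      have := hv2m.2.2
      omega
    exact S11.hkey hperm h v1 v2 hv1m.2.1 hv2m.2.1 hne hd1 hd2
  omega
end

section
/- Let f : F_2^m → F_2^m be a vectorial Boolean function with f(0) = 0 and let a ∈ F_2^m be nonzero. Let V_a = {v ∈ F_2^m : ⟨f̂_a, v⟩ is constant}, a linear subspace of F_2^m, and let V_a^⊥ be its orthogonal complement with respect to the standard dot product over F_2. Then f(a) + V_a^⊥ is the smallest affine subspace of F_2^m containing Im(f̂_a): it contains Im(f̂_a), and every affine subspace of F_2^m containing Im(f̂_a) contains f(a) + V_a^⊥. -/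
lemma dotp_add_right {m : ℕ} (v x y : BV m) : dotp v (x + y) = dotp v x + dotp v y := by
  simp [dotp, mul_add, Finset.sum_add_distrib]

lemma dotp_sub_right {m : ℕ} (v x y : BV m) : dotp v (x - y) = dotp v x - dotp v y := by
  simp [dotp, mul_sub, Finset.sum_sub_distrib]

lemma dotp_of_dual {m : ℕ} (φ : Module.Dual (ZMod 2) (BV m)) (x : BV m) :
    dotp (fun i => φ (Pi.single i 1)) x = φ x := by
  have hx : x = ∑ i, x i • Pi.single i (1 : ZMod 2) := by
    simp [← Pi.single_smul, Finset.univ_sum_single]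
  calc dotp (fun i => φ (Pi.single i 1)) x
      = ∑ i, x i • φ (Pi.single i 1) := by
        simp [dotp, mul_comm, smul_eq_mul]
    _ = φ (∑ i, x i • Pi.single i (1 : ZMod 2)) := by
        simp [map_sum]
    _ = φ x := by rw [← hx]

/-- Separation: if `w ∉ W`, there is `v` with `dotp v` vanishing on `W` but not at `w`. -/
lemma exists_dotp_sep {m : ℕ} (W : Submodule (ZMod 2) (BV m)) (w : BV m) (hw : w ∉ W) :
    ∃ v : BV m, (∀ u ∈ W, dotp v u = 0) ∧ dotp v w ≠ 0 := by
  have hq : W.mkQ w ≠ 0 := by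
    simpa [Submodule.Quotient.mk_eq_zero] using hw
  have := (Module.forall_dual_apply_eq_zero_iff (ZMod 2) (W.mkQ w)).not.mpr hq
  push_neg at this
  obtain ⟨φ, hφ⟩ := this
  set ψ : Module.Dual (ZMod 2) (BV m) := φ ∘ₗ W.mkQ with hψ
  refine ⟨fun i => ψ (Pi.single i 1), ?_, ?_⟩
  · intro u hu
    rw [dotp_of_dual]
    simp [hψ, (Submodule.Quotient.mk_eq_zero W).mpr hu]
  · rw [dotp_of_dual]
    simpa [hψ] using hφ

/-- Let `V_a = {v : ⟨f̂_a, v⟩ is constant}`. Then `f(a) + V_a^⊥` is the smallest affine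
subspace of `F_2^m` containing `Im(f̂_a)`: it contains `Im(f̂_a)`, and any coset `w₀ + W` of
a linear subspace `W` containing `Im(f̂_a)` contains `f(a) + V_a^⊥`. -/
theorem stmt_15 (m : ℕ) (f : BV m → BV m) (hf0 : f 0 = 0) (a : BV m) (ha : a ≠ 0)
    (Va : Submodule (ZMod 2) (BV m))
    (hVa : ∀ v : BV m, v ∈ Va ↔ ∃ c : ZMod 2, ∀ x, dotp v (der f a x) = c) :
    Set.range (der f a) ⊆ {y : BV m | ∃ w : BV m, (∀ v ∈ Va, dotp v w = 0) ∧ y = f a + w}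
    ∧ ∀ (W : Submodule (ZMod 2) (BV m)) (w₀ : BV m),
        Set.range (der f a) ⊆ {y : BV m | ∃ u ∈ W, y = w₀ + u} →
        {y : BV m | ∃ w : BV m, (∀ v ∈ Va, dotp v w = 0) ∧ y = f a + w}
          ⊆ {y : BV m | ∃ u ∈ W, y = w₀ + u} := by
  have hder0 : der f a 0 = f a := by simp [der, hf0]
  constructor
  · rintro y ⟨x, rfl⟩
    refine ⟨der f a x - f a, ?_, by ring⟩
    intro v hv
    obtain ⟨c, hc⟩ := (hVa v).mp hv
    have h1 := hc x
    have h2 := hc 0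
    rw [hder0] at h2
    rw [dotp_sub_right, h1, h2, sub_self]
  · intro W w₀ hW
    rintro y ⟨w, hw, rfl⟩
    have hfa : f a ∈ {y : BV m | ∃ u ∈ W, y = w₀ + u} := hW ⟨0, hder0⟩
    obtain ⟨u₀, hu₀, hfa'⟩ := hfa
    have hwW : w ∈ W := by
      by_contra hwn
      obtain ⟨v, hv0, hvw⟩ := exists_dotp_sep W w hwn
      have hvVa : v ∈ Va := by
        rw [hVa]
        refine ⟨dotp v w₀, fun x => ?_⟩
        obtain ⟨u, hu, hxu⟩ := hW ⟨x, rfl⟩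
        rw [hxu, dotp_add_right, hv0 u hu, add_zero]
      exact hvw (hw v hvVa)
    exact ⟨u₀ + w, W.add_mem hu₀ hwW, by rw [hfa']; ring⟩
end
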